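/- arXiv:1308.6597 — 2 statements merged into one kernel-verified Lean document; each statement's English description precedes it below -/
import Mathlib

section
/- Let X be a transitive sectional-Anosov flow on a compact manifold M of dimension n ≥ 3, with sectional-hyperbolic splitting T_{M(X)} M = E^s ⊕ E^c. If x ∈ M(X) is not a singularity of X, then X(x) ∉ E^s_x. -/
open Set Filter Topology TensorProduct

noncomputable section

/-- Euclidean space `ℝⁿ`, the model for the compact `n`-manifold `M`. -/
abbrev Euc (n : ℕ) := EuclideanSpace ℝ (Fin n)

/-- A `C¹` vector field `X` on the compact region `M ⊆ ℝⁿ`, inwardly transverse to the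
boundary, together with its (globally defined) flow `φ`.  Inward transversality is recorded
through the fact that the flow takes `M` into itself for nonnegative times. -/
structure FlowOn (n : ℕ) (M : Set (Euc n)) where
  /-- the vector field -/
  X : Euc n → Euc n
  /-- the flow of the vector field -/
  φ : ℝ → Euc n → Euc n
  contX : ContDiff ℝ 1 X
  cont : Continuous fun p : ℝ × Euc n => φ p.1 p.2
  flow_zero : ∀ x, φ 0 x = x
  flow_add : ∀ s t x, φ (s + t) x = φ s (φ t x)
  diff : ∀ t, ContDiff ℝ 1 (φ t)
  isFlowOf : ∀ x t, HasDerivAt (fun s => φ s x) (X (φ t x)) t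
  forward_inv : ∀ t : ℝ, 0 ≤ t → φ t '' M ⊆ M

namespace FlowOn

variable {n : ℕ} {M : Set (Euc n)}

/-- The maximal invariant set `M(X) = ⋂_{t ≥ 0} X_t(M)`. -/
def maxInv (F : FlowOn n M) : Set (Euc n) := ⋂ t ∈ Ici (0 : ℝ), F.φ t '' M

/-- The ω-limit set of a point. -/
def omegaSet (F : FlowOn n M) (x : Euc n) : Set (Euc n) :=
  {q | ∃ s : ℕ → ℝ, Tendsto s atTop atTop ∧ Tendsto (fun k => F.φ (s k) x) atTop (𝓝 q)}

/-- A set is invariant if `X_t(Λ) = Λ` for all `t ∈ ℝ`. -/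
def Invariant (F : FlowOn n M) (Λ : Set (Euc n)) : Prop := ∀ t : ℝ, F.φ t '' Λ = Λ

/-- The sectional-Anosov flow is transitive when its maximal invariant set is the
ω-limit set of one of its points. -/
def Transitive (F : FlowOn n M) : Prop := ∃ p ∈ F.maxInv, F.omegaSet p = F.maxInv

/-- An attracting set: a compact invariant set which is the intersection of the forward
images of a compact (isolating) neighborhood of itself. -/
def IsAttracting (F : FlowOn n M) (Λ : Set (Euc n)) : Prop :=
  IsCompact Λ ∧ F.Invariant Λ ∧
    ∃ U : Set (Euc n), IsCompact U ∧ U ⊆ M ∧ Λ ⊆ interior U ∧ Λ = ⋂ t ∈ Ioi (0 : ℝ), F.φ t '' U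

/-- An attractor is a transitive attracting set. -/
def IsAttractor (F : FlowOn n M) (Λ : Set (Euc n)) : Prop :=
  F.IsAttracting Λ ∧ ∃ p ∈ Λ, F.omegaSet p = Λ

end FlowOn

variable {n : ℕ} {M : Set (Euc n)}

/-- The derivative `DX_t(x)` of the time-`t` map of the flow. -/
def dflow (F : FlowOn n M) (t : ℝ) (x : Euc n) : Euc n →L[ℝ] Euc n :=
  fderiv ℝ (F.φ t) x

/-- Two vector fields are `ε`-close in the `C¹` topology on `M` when their values and their
derivatives differ by at most `ε` at every point of `M`. -/
def C1CloseOn (X Y : Euc n → Euc n) (M : Set (Euc n)) (ε : ℝ) : Prop :=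
  ∀ x ∈ M, ‖Y x - X x‖ ≤ ε ∧ ‖fderiv ℝ Y x - fderiv ℝ X x‖ ≤ ε

/-- A linear endomorphism is hyperbolic when no eigenvalue of its complexification lies on
the imaginary axis. -/
def IsHyperbolicEnd (f : Euc n →ₗ[ℝ] Euc n) : Prop :=
  ∀ μ : ℂ, Module.End.HasEigenvalue (f.baseChange ℂ) μ → μ.re ≠ 0

/-- The number (with algebraic multiplicity) of eigenvalues of `f` with negative real part;
equivalently, the dimension of the stable manifold of the hyperbolic singularity with
linear part `f`. -/
def stableDim (f : Euc n →ₗ[ℝ] Euc n) : ℕ :=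
  Module.finrank ℂ (⨆ μ ∈ {z : ℂ | z.re < 0},
    Module.End.maxGenEigenspace (f.baseChange ℂ) μ : Submodule ℂ (ℂ ⊗[ℝ] Euc n))

/-- The (unsigned) area of the parallelogram spanned by `u` and `v`; the two-dimensional
Jacobian `|det (DX_t(x)|_L)|` is the ratio of these areas. -/
def gramArea (u v : Euc n) : ℝ :=
  Real.sqrt (‖u‖ ^ 2 * ‖v‖ ^ 2 - (inner ℝ u v : ℝ) ^ 2)

/-- A sectional-hyperbolic splitting `T_Λ M = E^s ⊕ E^c` over the compact invariant set `Λ`,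
recorded by a continuous family `P` of idempotents with `E^s_x = range (P x)` and
`E^c_x = ker (P x)`: `E^s` is contracting and dominated by `E^c`, `E^c` is sectionally
expanding (of dimension at least two), and all singularities in `Λ` are hyperbolic. -/
structure IsSectionalHyperbolicSplittingOn (F : FlowOn n M) (Λ : Set (Euc n))
    (P : Euc n → Euc n →L[ℝ] Euc n) (C lam : ℝ) : Prop where
  Cpos : 0 < C
  lampos : 0 < lam
  continuous : ContinuousOn P Λ
  idem : ∀ x ∈ Λ, (P x).comp (P x) = P x
  invStable : ∀ x ∈ Λ, ∀ t : ℝ,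
    Submodule.map (dflow F t x).toLinearMap (LinearMap.range (P x).toLinearMap) = LinearMap.range (P (F.φ t x)).toLinearMap
  invCentral : ∀ x ∈ Λ, ∀ t : ℝ,
    Submodule.map (dflow F t x).toLinearMap (LinearMap.ker (P x).toLinearMap) = LinearMap.ker (P (F.φ t x)).toLinearMap
  contracting : ∀ x ∈ Λ, ∀ t > (0 : ℝ), ∀ v ∈ LinearMap.range (P x).toLinearMap,
    ‖dflow F t x v‖ ≤ C * Real.exp (-lam * t) * ‖v‖
  dominated : ∀ x ∈ Λ, ∀ t > (0 : ℝ), ∀ v ∈ LinearMap.range (P x).toLinearMap, ∀ w ∈ LinearMap.ker (P x).toLinearMap,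
    ‖dflow F t x v‖ * ‖w‖ ≤ C * Real.exp (-lam * t) * ‖dflow F t x w‖ * ‖v‖
  centralDim : ∀ x ∈ Λ, 2 ≤ Module.finrank ℝ (LinearMap.ker (P x).toLinearMap)
  sectionallyExpanding : ∀ x ∈ Λ, ∀ t > (0 : ℝ),
    ∀ u ∈ LinearMap.ker (P x).toLinearMap, ∀ v ∈ LinearMap.ker (P x).toLinearMap,
      C⁻¹ * Real.exp (lam * t) * gramArea u v ≤ gramArea (dflow F t x u) (dflow F t x v)
  hypSing : ∀ x ∈ Λ, F.X x = 0 → IsHyperbolicEnd (fderiv ℝ F.X x).toLinearMap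

/-- A sectional-Anosov flow: the maximal invariant set is sectional-hyperbolic. -/
def SectionalAnosov (F : FlowOn n M) : Prop :=
  ∃ P C lam, IsSectionalHyperbolicSplittingOn F F.maxInv P C lam

/-- A hyperbolic splitting `T_Λ M = E^s ⊕ E^X ⊕ E^u` over a (nonsingular) compact invariant
set `Λ`, recorded by two continuous families of idempotents `Ps`, `Pu` with
`E^s_x = range (Ps x)`, `E^u_x = range (Pu x)`, the complementary subbundle
`range (1 - Ps - Pu)` being the flow direction. -/
structure IsHyperbolicSplittingOn (F : FlowOn n M) (Λ : Set (Euc n))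
    (Ps Pu : Euc n → Euc n →L[ℝ] Euc n) (C lam : ℝ) : Prop where
  Cpos : 0 < C
  lampos : 0 < lam
  continuousS : ContinuousOn Ps Λ
  continuousU : ContinuousOn Pu Λ
  idemS : ∀ x ∈ Λ, (Ps x).comp (Ps x) = Ps x
  idemU : ∀ x ∈ Λ, (Pu x).comp (Pu x) = Pu x
  orthoSU : ∀ x ∈ Λ, (Ps x).comp (Pu x) = 0
  orthoUS : ∀ x ∈ Λ, (Pu x).comp (Ps x) = 0
  flowDir : ∀ x ∈ Λ,
    LinearMap.range (ContinuousLinearMap.id ℝ (Euc n) - Ps x - Pu x).toLinearMap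
      = Submodule.span ℝ {F.X x}
  invStable : ∀ x ∈ Λ, ∀ t : ℝ,
    Submodule.map (dflow F t x).toLinearMap (LinearMap.range (Ps x).toLinearMap) = LinearMap.range (Ps (F.φ t x)).toLinearMap
  invUnstable : ∀ x ∈ Λ, ∀ t : ℝ,
    Submodule.map (dflow F t x).toLinearMap (LinearMap.range (Pu x).toLinearMap) = LinearMap.range (Pu (F.φ t x)).toLinearMap
  contracting : ∀ x ∈ Λ, ∀ t > (0 : ℝ), ∀ v ∈ LinearMap.range (Ps x).toLinearMap,
    ‖dflow F t x v‖ ≤ C * Real.exp (-lam * t) * ‖v‖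
  expanding : ∀ x ∈ Λ, ∀ t > (0 : ℝ), ∀ v ∈ LinearMap.range (Pu x).toLinearMap,
    ‖dflow F (-t) x v‖ ≤ C * Real.exp (-lam * t) * ‖v‖

/-- `Λ` is a hyperbolic set of saddle type: it carries a hyperbolic splitting with
`E^s ≠ 0` and `E^u ≠ 0`. -/
def HyperbolicSaddleOn (F : FlowOn n M) (Λ : Set (Euc n)) : Prop :=
  ∃ Ps Pu C lam, IsHyperbolicSplittingOn F Λ Ps Pu C lam ∧
    ∀ x ∈ Λ, LinearMap.range (Ps x).toLinearMap ≠ ⊥ ∧ LinearMap.range (Pu x).toLinearMap ≠ ⊥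


/-
If `X(x)` lay in `E^s_x`, invariance of `E^s` would put `X` in `E^s` along the whole backward
orbit of `x`, which stays in the compact set `M(X) ⊆ M` where `‖X‖ ≤ B`. Flowing forward for
time `t` contracts stable vectors, so `‖X(x)‖ ≤ C e^{-λt} B` for every `t > 0`, forcing `X(x) = 0`.
-/

namespace FlowOn

variable {n : ℕ} {M : Set (Euc n)} (F : FlowOn n M)

lemma maxInv_subset : F.maxInv ⊆ M := by
  intro x hx
  obtain ⟨y, hy, rfl⟩ := mem_iInter₂.1 hx 0 (mem_Ici.2 le_rfl)
  rwa [F.flow_zero]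

lemma flow_neg_mem_maxInv {x : Euc n} (hx : x ∈ F.maxInv) {s : ℝ} (hs : 0 ≤ s) :
    F.φ (-s) x ∈ F.maxInv := by
  refine mem_iInter₂.2 fun t (ht : 0 ≤ t) => ?_
  obtain ⟨y, hy, rfl⟩ := mem_iInter₂.1 hx (t + s) (mem_Ici.2 (by linarith))
  exact ⟨y, hy, by rw [← F.flow_add, neg_add_cancel_comm_assoc]⟩

lemma flow_flow_neg (t : ℝ) (x : Euc n) : F.φ t (F.φ (-t) x) = x := by
  rw [← F.flow_add, add_neg_cancel, F.flow_zero]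

lemma dflow_apply_X (t : ℝ) (y : Euc n) : dflow F t y (F.X y) = F.X (F.φ t y) := by
  have hchain : HasDerivAt (fun s => F.φ t (F.φ s y)) (dflow F t y (F.X y)) 0 := by
    have hD : HasFDerivAt (F.φ t) (dflow F t y) (F.φ 0 y) := by
      rw [F.flow_zero]
      exact ((F.diff t).differentiable one_ne_zero y).hasFDerivAt
    have h0 := F.isFlowOf y 0
    rw [F.flow_zero] at h0
    exact hD.comp_hasDerivAt 0 h0
  have hshift : HasDerivAt (fun s => F.φ t (F.φ s y)) (F.X (F.φ t y)) 0 := by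
    simp_rw [← F.flow_add]
    simpa using (F.isFlowOf y (t + 0)).comp_const_add t 0
  exact hchain.unique hshift

end FlowOn

namespace IsSectionalHyperbolicSplittingOn

variable {n : ℕ} {M : Set (Euc n)} {F : FlowOn n M} {Λ : Set (Euc n)}
  {P : Euc n → Euc n →L[ℝ] Euc n} {C lam : ℝ}

lemma X_flow_mem_range (hsh : IsSectionalHyperbolicSplittingOn F Λ P C lam) {x : Euc n}
    (hx : x ∈ Λ) (t : ℝ) (hX : F.X x ∈ LinearMap.range (P x).toLinearMap) :
    F.X (F.φ t x) ∈ LinearMap.range (P (F.φ t x)).toLinearMap := by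
  rw [← hsh.invStable x hx t, ← F.dflow_apply_X]
  exact Submodule.mem_map_of_mem hX

lemma norm_X_flow_le (hsh : IsSectionalHyperbolicSplittingOn F Λ P C lam) {y : Euc n}
    (hy : y ∈ Λ) {t : ℝ} (ht : 0 < t) (hX : F.X y ∈ LinearMap.range (P y).toLinearMap) :
    ‖F.X (F.φ t y)‖ ≤ C * Real.exp (-lam * t) * ‖F.X y‖ := by
  rw [← F.dflow_apply_X]
  exact hsh.contracting y hy t ht _ hX

end IsSectionalHyperbolicSplittingOn

theorem vector_field_not_in_stable_bundle_at_regular_points_general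
    {n : ℕ} {M : Set (Euc n)} (hM : IsCompact M)
    (F : FlowOn n M)
    (P : Euc n → Euc n →L[ℝ] Euc n) (C lam : ℝ)
    (hsh : IsSectionalHyperbolicSplittingOn F F.maxInv P C lam)
    (x : Euc n) (hx : x ∈ F.maxInv) (hreg : F.X x ≠ 0) :
    F.X x ∉ LinearMap.range (P x).toLinearMap := by
  intro hmem
  obtain ⟨B, hB⟩ := hM.exists_bound_of_continuousOn F.contX.continuous.continuousOn
  have hbound : ∀ t > (0 : ℝ), ‖F.X x‖ ≤ C * Real.exp (-lam * t) * B := by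
    intro t ht
    have hy := F.flow_neg_mem_maxInv hx ht.le
    calc ‖F.X x‖ = ‖F.X (F.φ t (F.φ (-t) x))‖ := by rw [F.flow_flow_neg]
      _ ≤ C * Real.exp (-lam * t) * ‖F.X (F.φ (-t) x)‖ :=
        hsh.norm_X_flow_le hy ht (hsh.X_flow_mem_range hx (-t) hmem)
      _ ≤ C * Real.exp (-lam * t) * B := by
        have := hsh.Cpos
        gcongr
        exact hB _ (F.maxInv_subset hy)
  have hlim : Tendsto (fun t : ℝ => C * Real.exp (-lam * t) * B) atTop (𝓝 0) := by
    have hexp := Real.tendsto_exp_atBot.comp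
      (tendsto_id.const_mul_atTop_of_neg (neg_lt_zero.2 hsh.lampos))
    simpa using (hexp.const_mul C).mul_const B
  have hle : ‖F.X x‖ ≤ 0 := ge_of_tendsto hlim ((eventually_gt_atTop 0).mono hbound)
  exact hreg (norm_le_zero_iff.1 hle)

/-- For a transitive sectional-Anosov flow on a compact `n`-manifold,
`n ≥ 3`, with sectional-hyperbolic splitting `T_{M(X)}M = E^s ⊕ E^c`
(`E^s_x = range (P x)`), the vector field is nowhere tangent to the stable subbundle at
regular points: if `x ∈ M(X)` is not a singularity, then `X(x) ∉ E^s_x`. -/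
theorem vector_field_not_in_stable_bundle_at_regular_points
    {n : ℕ} (hn : 3 ≤ n) {M : Set (Euc n)} (hM : IsCompact M)
    (F : FlowOn n M) (htrans : F.Transitive)
    (P : Euc n → Euc n →L[ℝ] Euc n) (C lam : ℝ)
    (hsh : IsSectionalHyperbolicSplittingOn F F.maxInv P C lam)
    (x : Euc n) (hx : x ∈ F.maxInv) (hreg : F.X x ≠ 0) :
    F.X x ∉ LinearMap.range (P x).toLinearMap :=
  vector_field_not_in_stable_bundle_at_regular_points_general hM F P C lam hsh x hx hreg
end
end

section
/- Let M be a compact metric space, let φ^n be a sequence of continuous flows on M converging to a continuous flow φ uniformly on M × [−T, T] for every T > 0, and for each n let A^n be a nonempty compact φ^n-invariant subset of M. Then the set A of accumulation points of sequences (x_n) with x_n ∈ A^n, i.e. A = {x ∈ M : x = lim_{k→∞} x_{n_k} for some subsequence n_k → ∞ and x_{n_k} ∈ A^{n_k}}, is a nonempty compact φ-invariant subset of M. Moreover, if each A^n is contained in a fixed compact set K ⊆ M, then A ⊆ K. -/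
open Set Filter Topology

/-- Let `φᵏ` be continuous flows on a compact metric space `M` converging
to a flow `φ` uniformly on `M × [−T, T]` for every `T > 0`, and let `Aᵏ` be nonempty
compact `φᵏ`-invariant sets.  Then the set `A` of accumulation points of sequences
`xₖ ∈ Aᵏ` is a nonempty compact `φ`-invariant set; moreover, if all `Aᵏ` lie in a fixed
compact set `K`, then `A ⊆ K`. -/
theorem accumulation_set_of_invariant_sets_is_invariant
    {M : Type*} [MetricSpace M] [CompactSpace M]
    (φ : ℝ → M → M) (hcont : Continuous fun p : ℝ × M => φ p.1 p.2)
    (h0 : ∀ x, φ 0 x = x) (hadd : ∀ s t x, φ (s + t) x = φ s (φ t x))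
    (ψ : ℕ → ℝ → M → M)
    (hcontn : ∀ k, Continuous fun p : ℝ × M => ψ k p.1 p.2)
    (h0n : ∀ k x, ψ k 0 x = x) (haddn : ∀ k s t x, ψ k (s + t) x = ψ k s (ψ k t x))
    (hconv : ∀ T > (0 : ℝ), ∀ ε > (0 : ℝ), ∃ N : ℕ, ∀ k ≥ N, ∀ t ∈ Icc (-T) T, ∀ x : M,
      dist (ψ k t x) (φ t x) < ε)
    (A : ℕ → Set M) (hne : ∀ k, (A k).Nonempty) (hcomp : ∀ k, IsCompact (A k))
    (hinv : ∀ k, ∀ t : ℝ, ψ k t '' A k = A k)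
    (Acc : Set M)
    (hAcc : Acc = {a : M | ∃ (κ : ℕ → ℕ) (x : ℕ → M), StrictMono κ ∧
      (∀ j, x j ∈ A (κ j)) ∧ Tendsto x atTop (𝓝 a)}) :
    Acc.Nonempty ∧ IsCompact Acc ∧ (∀ t : ℝ, φ t '' Acc = Acc) ∧
      ∀ K : Set M, IsCompact K → (∀ k, A k ⊆ K) → Acc ⊆ K := by
  -- choose a point in each `A k`
  choose y hy using hne
  -- Nonemptiness
  have hnonempty : Acc.Nonempty := by
    obtain ⟨a, -, κ, hκ, hten⟩ := isCompact_univ.tendsto_subseq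
      (x := y) (fun n => mem_univ _)
    refine ⟨a, ?_⟩
    rw [hAcc]
    exact ⟨κ, fun j => y (κ j), hκ, fun j => hy (κ j), hten⟩
  -- characterization as intersection of closures of tails
  have hchar : Acc = ⋂ N : ℕ, closure (⋃ k ∈ Ici N, A k) := by
    apply Subset.antisymm
    · intro a ha
      rw [hAcc] at ha
      obtain ⟨κ, x, hκ, hxA, hten⟩ := ha
      refine mem_iInter.2 fun N => ?_
      refine mem_closure_of_tendsto hten ?_
      filter_upwards [eventually_ge_atTop N] with j hj
      exact mem_biUnion (mem_Ici.2 (hj.trans hκ.le_apply)) (hxA j)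
    · intro a ha
      rw [mem_iInter] at ha
      have hex : ∀ N : ℕ, ∀ ε > (0 : ℝ), ∃ p : ℕ × M,
          N ≤ p.1 ∧ p.2 ∈ A p.1 ∧ dist p.2 a < ε := by
        intro N ε hε
        have := (Metric.mem_closure_iff.1 (ha N)) ε hε
        obtain ⟨b, hb, hdb⟩ := this
        obtain ⟨k, hk, hbk⟩ := mem_iUnion₂.1 hb
        exact ⟨⟨k, b⟩, hk, hbk, by rwa [dist_comm]⟩
      have key : ∀ j N : ℕ, ∃ p : ℕ × M,
          N ≤ p.1 ∧ p.2 ∈ A p.1 ∧ dist p.2 a < 1 / (j + 1) := by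
        intro j N
        exact hex N (1 / (j + 1)) (by positivity)
      set g : ℕ → ℕ × M := fun j =>
        Nat.rec (Classical.choose (key 0 0))
          (fun j ih => Classical.choose (key (j + 1) (ih.1 + 1))) j with hg
      have hprop : ∀ j, (g j).2 ∈ A (g j).1 ∧ dist (g j).2 a < 1 / (j + 1) := by
        intro j
        cases j with
        | zero => exact (Classical.choose_spec (key 0 0)).2
        | succ j => exact (Classical.choose_spec (key (j + 1) ((g j).1 + 1))).2
      have hmono : StrictMono fun j => (g j).1 := by
        apply strictMono_nat_of_lt_succ
        intro j
        have := (Classical.choose_spec (key (j + 1) ((g j).1 + 1))).1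
        exact Nat.lt_of_succ_le this
      rw [hAcc]
      refine ⟨fun j => (g j).1, fun j => (g j).2, hmono, fun j => (hprop j).1, ?_⟩
      rw [Metric.tendsto_atTop]
      intro ε hε
      obtain ⟨N, hN⟩ := exists_nat_one_div_lt hε
      refine ⟨N, fun j hj => ?_⟩
      calc dist (g j).2 a < 1 / (j + 1) := (hprop j).2
        _ ≤ 1 / (N + 1) := by
            apply div_le_div_of_nonneg_left one_pos.le (by positivity)
            exact_mod_cast Nat.succ_le_succ hj
        _ < ε := hN
  -- Compactness
  have hclosed : IsClosed Acc := by
    rw [hchar]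
    exact isClosed_iInter fun N => isClosed_closure
  have hcompAcc : IsCompact Acc := hclosed.isCompact
  -- forward invariance (both directions via this)
  have hsubset : ∀ t : ℝ, φ t '' Acc ⊆ Acc := by
    intro t b hb
    obtain ⟨a, ha, rfl⟩ := hb
    rw [hAcc] at ha ⊢
    obtain ⟨κ, x, hκ, hxA, hten⟩ := ha
    refine ⟨κ, fun j => ψ (κ j) t (x j), hκ, ?_, ?_⟩
    · intro j
      rw [← hinv (κ j) t]
      exact mem_image_of_mem _ (hxA j)
    · rw [Metric.tendsto_atTop]
      intro ε hε
      have hT : (0 : ℝ) < |t| + 1 := by positivity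
      obtain ⟨N1, hN1⟩ := hconv (|t| + 1) hT (ε / 2) (by positivity)
      have htmem : t ∈ Icc (-(|t| + 1)) (|t| + 1) := by
        constructor <;> [nlinarith [abs_nonneg t, neg_abs_le t]; nlinarith [le_abs_self t]]
      have hcont2 : Tendsto (fun j => φ t (x j)) atTop (𝓝 (φ t a)) := by
        have : Continuous fun y => φ t y := hcont.comp (continuous_const.prodMk continuous_id)
        exact (this.tendsto a).comp hten
      rw [Metric.tendsto_atTop] at hcont2
      obtain ⟨N2, hN2⟩ := hcont2 (ε / 2) (by positivity)
      refine ⟨max N1 N2, fun j hj => ?_⟩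
      have h1 : dist (ψ (κ j) t (x j)) (φ t (x j)) < ε / 2 :=
        hN1 (κ j) (le_trans (le_max_left _ _) (hj.trans hκ.le_apply)) t htmem (x j)
      have h2 : dist (φ t (x j)) (φ t a) < ε / 2 := hN2 j (le_trans (le_max_right _ _) hj)
      calc dist (ψ (κ j) t (x j)) (φ t a)
          ≤ dist (ψ (κ j) t (x j)) (φ t (x j)) + dist (φ t (x j)) (φ t a) := dist_triangle _ _ _
        _ < ε / 2 + ε / 2 := add_lt_add h1 h2
        _ = ε := by ring
  have hinvAcc : ∀ t : ℝ, φ t '' Acc = Acc := by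
    intro t
    refine Subset.antisymm (hsubset t) ?_
    intro a ha
    refine ⟨φ (-t) a, hsubset (-t) (mem_image_of_mem _ ha), ?_⟩
    rw [← hadd t (-t) a]
    simp [h0]
  refine ⟨hnonempty, hcompAcc, hinvAcc, ?_⟩
  intro K hK hAK a ha
  rw [hAcc] at ha
  obtain ⟨κ, x, hκ, hxA, hten⟩ := ha
  exact hK.isClosed.mem_of_tendsto hten (Eventually.of_forall fun j => hAK (κ j) (hxA j))
end
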